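/- arXiv:0807.4671 — 3 statements merged into one kernel-verified Lean document; each statement's English description precedes it below -/
import Mathlib

section
/- Let q = 2^r with r a positive integer, and let a ∈ 𝔽_q^*. Then Σ_{w ∈ SO⁺(2,q)} λ(a · Tr w) = K(λ;a), where Tr w is the matrix trace of w. -/
open Finset Matrix

/-- The quadratic form `θ⁺(x) = ∑ i, x_i x_{n+i}` on `F^{2n}` (columns indexed by `Fin n ⊕ Fin n`). -/
def thetaPlus (F : Type) [Field F] (n : ℕ) (x : Fin n ⊕ Fin n → F) : F :=
  ∑ i : Fin n, x (Sum.inl i) * x (Sum.inr i)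

/-- The orthogonal group `O⁺(2n,q)`: invertible matrices preserving `θ⁺`. -/
noncomputable def OplusGrp (F : Type) [Field F] [Fintype F] [DecidableEq F] (n : ℕ) :
    Finset (Matrix (Fin n ⊕ Fin n) (Fin n ⊕ Fin n) F) := by
  classical
  exact Finset.univ.filter (fun w => IsUnit w ∧
    ∀ x : Fin n ⊕ Fin n → F, thetaPlus F n (w.mulVec x) = thetaPlus F n x)

/-- `SO⁺(2n,q)`: the kernel of `δ⁺(w) = Tr(B ᵗC)` on `O⁺(2n,q)`,
where `w = [[A,B],[C,D]]` in `n × n` blocks. -/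
noncomputable def SOplusGrp (F : Type) [Field F] [Fintype F] [DecidableEq F] (n : ℕ) :
    Finset (Matrix (Fin n ⊕ Fin n) (Fin n ⊕ Fin n) F) := by
  classical
  exact (OplusGrp F n).filter
    (fun w => Matrix.trace (Matrix.toBlocks₁₂ w * (Matrix.toBlocks₂₁ w)ᵀ) = 0)

/-- The trace map `tr(x) = x + x² + ⋯ + x^{2^{r−1}}`, valued in `𝔽₂ = {0,1} ⊆ F`. -/
def trF (F : Type) [Field F] (r : ℕ) (x : F) : F := ∑ i ∈ Finset.range r, x ^ 2 ^ i

/-- The canonical additive character `λ(x) = (−1)^{tr(x)} ∈ {±1} ⊆ ℤ`. -/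
noncomputable def lam (F : Type) [Field F] (r : ℕ) (x : F) : ℤ := by
  classical exact if trF F r x = 0 then 1 else -1

/-- The trace map `tr` viewed as a function into `𝔽₂ = ZMod 2`. -/
noncomputable def tr2 (F : Type) [Field F] (r : ℕ) (x : F) : ZMod 2 := by
  classical exact if trF F r x = 0 then 0 else 1

/-- The Kloosterman sum `K(λ;a) = ∑_{α ∈ F*} λ(α + aα⁻¹)`. -/
noncomputable def Kl (F : Type) [Field F] [Fintype F] (r : ℕ) (a : F) : ℤ := by
  classical
  exact ∑ α ∈ Finset.univ.filter (fun α : F => α ≠ 0), lam F r (α + a * α⁻¹)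

/-- The `m`-dimensional Kloosterman sum
`K_m(λ;a) = ∑_{α₁,…,α_m ∈ F*} λ(α₁ + ⋯ + α_m + aα₁⁻¹⋯α_m⁻¹)`;
for `m = 0` this is `K₀(λ;a) = λ(a)`. -/
noncomputable def Klm (F : Type) [Field F] [Fintype F] (r m : ℕ) (a : F) : ℤ := by
  classical
  exact ∑ v ∈ Finset.univ.filter (fun v : Fin m → F => ∀ i, v i ≠ 0),
    lam F r ((∑ i, v i) + a * (∏ i, v i)⁻¹)

/-- The power moment `MK^h = ∑_{a ∈ F*} K(λ;a)^h`. -/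
noncomputable def MK (F : Type) [Field F] [Fintype F] (r h : ℕ) : ℤ := by
  classical exact ∑ a ∈ Finset.univ.filter (fun a : F => a ≠ 0), (Kl F r a) ^ h

/-- The power moment `MK₂^h = ∑_{a ∈ F*} K₂(λ;a)^h` of 2-dimensional Kloosterman sums. -/
noncomputable def MK2 (F : Type) [Field F] [Fintype F] (r h : ℕ) : ℤ := by
  classical exact ∑ a ∈ Finset.univ.filter (fun a : F => a ≠ 0), (Klm F r 2 a) ^ h

/-- The binary code `C(G) = {u ∈ 𝔽₂^G : ∑_{g ∈ G} u_g Tr(g) = 0 in F}`. -/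
noncomputable def code (F : Type) [Field F] [Fintype F] [DecidableEq F]
    {ι : Type} [Fintype ι] [DecidableEq ι] (G : Finset (Matrix ι ι F)) :
    Finset (↥G → ZMod 2) := by
  classical
  exact Finset.univ.filter
    (fun u => ∑ g : ↥G, (u g).val • Matrix.trace (g : Matrix ι ι F) = 0)

/-- Number of codewords of Hamming weight `j` in the code `C(G)`. -/
noncomputable def wtCount (F : Type) [Field F] [Fintype F] [DecidableEq F]
    {ι : Type} [Fintype ι] [DecidableEq ι] (G : Finset (Matrix ι ι F)) (j : ℕ) : ℕ := by
  classical
  exact ((code F G).filter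
    (fun u => (Finset.univ.filter (fun g : ↥G => u g = 1)).card = j)).card

/-- `t! · S(h,t)` where `S(h,t)` is the Stirling number of the second kind,
`S(h,t) = (1/t!) ∑_{j=0}^{t} (−1)^{t−j} C(t,j) j^h`. -/
def tS (h t : ℕ) : ℤ :=
  ∑ j ∈ Finset.range (t + 1), (-1 : ℤ) ^ (t - j) * (t.choose j : ℤ) * (j : ℤ) ^ h

/-- Binomial coefficient with integer arguments: `0` whenever `k < 0` or `k > n`. -/
def ichoose (n k : ℤ) : ℤ := if 0 ≤ k ∧ k ≤ n then (n.toNat.choose k.toNat : ℤ) else 0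

/-!
An element of `SO⁺(2,q)` is a 2×2 matrix `[[A,B],[C,D]]`; evaluating `θ⁺` on `e₁`, `e₂`, `e₁+e₂`
gives `AC = BD = 0` and `AD + BC = 1`, while `δ⁺ = 0` says `BC = 0`. Hence `SO⁺(2,q)` is the
torus `{diag(α, α⁻¹) : α ≠ 0}` and the sum is `∑_α λ(a(α + α⁻¹))`. Rescaling `α ↦ aα` turns this
into `K(λ;a²)`, and `K(λ;a²) = K(λ;a)` since squaring permutes `𝔽_q^*` and `λ(x²) = λ(x)`.
-/

section

variable {F : Type} [Field F]

lemma charP_two_of_card_eq_two_pow [Fintype F] {r : ℕ} (hF : Fintype.card F = 2 ^ r) :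
    CharP F 2 := by
  have hr : r ≠ 0 := by
    rintro rfl
    exact (Fintype.one_lt_card (α := F)).ne' hF
  refine ringChar.of_eq (FiniteField.even_card_iff_char_two.mpr ?_)
  rw [hF, ← Nat.succ_pred_eq_of_ne_zero hr, pow_succ, Nat.mul_mod_left]

lemma trF_sq [CharP F 2] (r : ℕ) (x : F) : trF F r (x ^ 2) = trF F r x ^ 2 := by
  rw [trF, trF, sum_pow_char]
  exact sum_congr rfl fun i _ => pow_right_comm x 2 (2 ^ i)

lemma lam_sq [CharP F 2] (r : ℕ) (x : F) : lam F r (x ^ 2) = lam F r x := by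
  unfold lam
  rw [trF_sq, pow_eq_zero_iff two_ne_zero]

def hyperbolicTorus (n : ℕ) (α : F) : Matrix (Fin n ⊕ Fin n) (Fin n ⊕ Fin n) F :=
  diagonal (Sum.elim (fun _ => α) fun _ => α⁻¹)

lemma hyperbolicTorus_injective (n : ℕ) [NeZero n] :
    Function.Injective (hyperbolicTorus (F := F) n) := fun α β h => by
  simpa [hyperbolicTorus] using congrFun (congrFun h (Sum.inl 0)) (Sum.inl 0)

lemma trace_hyperbolicTorus (n : ℕ) (α : F) :
    trace (hyperbolicTorus n α) = n * (α + α⁻¹) := by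
  simp [hyperbolicTorus, trace, Fintype.sum_sum_type, mul_add]

lemma hyperbolicTorus_mem_SOplusGrp [Fintype F] [DecidableEq F] (n : ℕ) {α : F} (hα : α ≠ 0) :
    hyperbolicTorus n α ∈ SOplusGrp F n := by
  simp only [SOplusGrp, OplusGrp, mem_filter, mem_univ, true_and]
  refine ⟨⟨?_, fun x => ?_⟩, ?_⟩
  · refine isUnit_diagonal.mpr (Pi.isUnit_iff.mpr fun i => ?_)
    rcases i with i | i <;> simp [hα]
  · simp only [thetaPlus, hyperbolicTorus, mulVec_diagonal, Sum.elim_inl, Sum.elim_inr]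
    refine sum_congr rfl fun i _ => ?_
    field_simp
  · simp [hyperbolicTorus, toBlocks₁₂]

lemma thetaPlus_one_mulVec (w : Matrix (Fin 1 ⊕ Fin 1) (Fin 1 ⊕ Fin 1) F) (s t : F) :
    thetaPlus F 1 (w *ᵥ Sum.elim (fun _ => s) fun _ => t) =
      (w (.inl 0) (.inl 0) * s + w (.inl 0) (.inr 0) * t) *
        (w (.inr 0) (.inl 0) * s + w (.inr 0) (.inr 0) * t) := by
  simp [thetaPlus, mulVec, dotProduct, Fintype.sum_sum_type]

lemma eq_hyperbolicTorus_of_mem_SOplusGrp_one [Fintype F] [DecidableEq F]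
    {w : Matrix (Fin 1 ⊕ Fin 1) (Fin 1 ⊕ Fin 1) F} (hw : w ∈ SOplusGrp F 1) :
    w (.inl 0) (.inl 0) ≠ 0 ∧ w = hyperbolicTorus 1 (w (.inl 0) (.inl 0)) := by
  simp only [SOplusGrp, OplusGrp, mem_filter, mem_univ, true_and] at hw
  obtain ⟨⟨-, hθ⟩, hδ⟩ := hw
  set A := w (.inl 0) (.inl 0)
  set B := w (.inl 0) (.inr 0)
  set C := w (.inr 0) (.inl 0)
  set D := w (.inr 0) (.inr 0)
  have hBC : B * C = 0 := by simpa [trace, mul_apply, toBlocks₁₂, toBlocks₂₁] using hδ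
  have hAC : A * C = 0 := by simpa [thetaPlus] using (thetaPlus_one_mulVec w 1 0).symm.trans (hθ _)
  have hBD : B * D = 0 := by simpa [thetaPlus] using (thetaPlus_one_mulVec w 0 1).symm.trans (hθ _)
  have hABCD : (A + B) * (C + D) = 1 := by
    simpa [thetaPlus] using (thetaPlus_one_mulVec w 1 1).symm.trans (hθ _)
  have hAD : A * D = 1 := by linear_combination hABCD - hAC - hBC - hBD
  have hA : A ≠ 0 := left_ne_zero_of_mul_eq_one hAD
  have hD : D ≠ 0 := right_ne_zero_of_mul_eq_one hAD
  have hC : C = 0 := (mul_eq_zero.mp hAC).resolve_left hA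
  have hB : B = 0 := (mul_eq_zero.mp hBD).resolve_right hD
  refine ⟨hA, ?_⟩
  ext (i | i) (j | j) <;> fin_cases i <;> fin_cases j
  · rfl
  · exact hB
  · exact hC
  · simpa [hyperbolicTorus] using eq_inv_of_mul_eq_one_right hAD

lemma SOplusGrp_one_eq_image [Fintype F] [DecidableEq F] :
    SOplusGrp F 1 = (univ.filter (· ≠ 0)).image (hyperbolicTorus 1) := by
  ext w
  simp only [mem_image, mem_filter, mem_univ, true_and]
  constructor
  · intro hw
    obtain ⟨hα, hw⟩ := eq_hyperbolicTorus_of_mem_SOplusGrp_one hw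
    exact ⟨_, hα, hw.symm⟩
  · rintro ⟨α, hα, rfl⟩
    exact hyperbolicTorus_mem_SOplusGrp 1 hα

lemma sum_lam_mul_add_inv_eq_Kl_sq [Fintype F] [DecidableEq F] (r : ℕ) {a : F} (ha : a ≠ 0) :
    ∑ α ∈ univ.filter (· ≠ 0), lam F r (a * (α + α⁻¹)) = Kl F r (a ^ 2) := by
  refine sum_equiv (Equiv.mulLeft₀ a ha) (by simp [ha]) fun α _ => ?_
  show lam F r _ = lam F r (a * α + a ^ 2 * (a * α)⁻¹)
  congr 1
  field_simp

lemma Kl_sq [Fintype F] [CharP F 2] (r : ℕ) (a : F) : Kl F r (a ^ 2) = Kl F r a := by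
  refine (sum_equiv (frobeniusEquiv F 2).toEquiv (by simp) fun α _ => ?_).symm
  show lam F r _ = lam F r (α ^ 2 + a ^ 2 * (α ^ 2)⁻¹)
  rw [← lam_sq, CharTwo.add_sq, mul_pow, inv_pow]

end

theorem stmt4_general (r : ℕ) (F : Type) [Field F] [Fintype F] [DecidableEq F]
    (hF : Fintype.card F = 2 ^ r) (a : F) (ha : a ≠ 0) :
    ∑ w ∈ SOplusGrp F 1, lam F r (a * Matrix.trace w) = Kl F r a := by
  have := charP_two_of_card_eq_two_pow hF
  rw [SOplusGrp_one_eq_image, sum_image (hyperbolicTorus_injective 1).injOn]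
  simp only [trace_hyperbolicTorus, Nat.cast_one, one_mul]
  rw [sum_lam_mul_add_inv_eq_Kl_sq r ha, Kl_sq]

theorem stmt4 (r : ℕ) (hr : 1 ≤ r) (F : Type) [Field F] [Fintype F] [DecidableEq F]
    (hF : Fintype.card F = 2 ^ r) (a : F) (ha : a ≠ 0) :
    ∑ w ∈ SOplusGrp F 1, lam F r (a * Matrix.trace w) = Kl F r a :=
  stmt4_general r F hF a ha
end

section
/- Let q = 2^r with r a positive integer, let m be a positive integer, and let β ∈ 𝔽_q. Then Σ_{a ∈ 𝔽_q^*} λ(−aβ) K_m(λ;a) equals q·K_{m−1}(λ;β^{−1}) + (−1)^{m+1} if β ≠ 0, and equals (−1)^{m+1} if β = 0, with the convention K₀(λ;γ) = λ(γ). -/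
open Finset Matrix

/-! Write `λ` as the additive character `ψ = (-1)^{Tr}` of `𝔽_q`. Expanding `K_m(ψ; a)` and
summing over `a` first, the inner sum `∑_{a ≠ 0} ψ(a((α₁⋯α_m)⁻¹ - β))` equals `q - 1` if
`α₁⋯α_m = β⁻¹` and `-1` otherwise. The `-1` terms contribute `-(∑_{α ≠ 0} ψ(α))^m = (-1)^{m+1}`.
The `q` terms form a sum over the fibre `α₁⋯α_m = β⁻¹`, which is empty for `β = 0` and, after
solving for `α_m`, is `K_{m-1}(ψ; β⁻¹)` for `β ≠ 0`. -/

section Trace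

variable {F : Type} [Field F] [Algebra (ZMod 2) F]

theorem trF_eq_algebraMap_trace [Fintype F] {r : ℕ} (hF : Fintype.card F = 2 ^ r) (x : F) :
    trF F r x = algebraMap (ZMod 2) F (Algebra.trace (ZMod 2) F x) := by
  have hr : Module.finrank (ZMod 2) F = r := by
    rw [Module.card_eq_pow_finrank (K := ZMod 2), ZMod.card] at hF
    exact Nat.pow_right_injective le_rfl hF
  rw [FiniteField.algebraMap_trace_eq_sum_pow, hr, Nat.card_zmod, trF]

variable (F) in
noncomputable def traceChar : AddChar F ℤ :=
  (AddChar.zmodChar 2 (by norm_num : (-1 : ℤ) ^ 2 = 1)).compAddMonoidHom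
    (Algebra.trace (ZMod 2) F).toAddMonoidHom

theorem lam_eq_traceChar [Fintype F] {r : ℕ} (hF : Fintype.card F = 2 ^ r) (x : F) :
    lam F r x = traceChar F x := by
  have htr : trF F r x = 0 ↔ Algebra.trace (ZMod 2) F x = 0 := by
    rw [trF_eq_algebraMap_trace hF, map_eq_zero_iff _ (algebraMap (ZMod 2) F).injective]
  simp only [lam, traceChar, AddChar.compAddMonoidHom_apply, LinearMap.toAddMonoidHom_coe,
    AddChar.zmodChar_apply]
  generalize Algebra.trace (ZMod 2) F x = t at htr
  obtain rfl | rfl : t = 0 ∨ t = 1 := by clear htr; revert t; decide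
  · simp [htr]
  · simp [htr, ZMod.val_one]

theorem traceChar_ne_one [Finite F] : traceChar F ≠ 1 := by
  obtain ⟨x, hx⟩ := Algebra.trace_surjective (ZMod 2) F 1
  rw [AddChar.ne_one_iff]
  exact ⟨x, by simp [traceChar, hx, AddChar.zmodChar_apply, ZMod.val_one]⟩

end Trace

section Kloosterman

open Finset

theorem AddChar.map_sum_eq_prod {ι A M : Type*} [AddCommMonoid A] [CommMonoid M]
    (ψ : AddChar A M) (s : Finset ι) (f : ι → A) : ψ (∑ i ∈ s, f i) = ∏ i ∈ s, ψ (f i) :=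
  map_prod ψ.toMonoidHom (fun i => Multiplicative.ofAdd (f i)) s

variable {F R : Type*} [Field F] [Fintype F] [DecidableEq F]

variable [CommRing R] (ψ : AddChar F R) in
noncomputable def kloosterman (m : ℕ) (a : F) : R :=
  ∑ v ∈ Fintype.piFinset fun _ : Fin m => univ.filter (· ≠ (0 : F)),
    ψ (∑ i, v i + a * (∏ i, v i)⁻¹)

theorem sum_piFinset_filter_prod_inv_eq {M : Type*} [AddCommMonoid M] {β : F} (hβ : β ≠ 0)
    (f : F → M) (m : ℕ) :
    ∑ v ∈ (Fintype.piFinset fun _ : Fin (m + 1) => univ.filter (· ≠ (0 : F))).filter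
        (fun v => (∏ i, v i)⁻¹ = β), f (∑ i, v i) =
      ∑ w ∈ Fintype.piFinset fun _ : Fin m => univ.filter (· ≠ (0 : F)),
        f (∑ i, w i + β⁻¹ * (∏ i, w i)⁻¹) := by
  have last_eq {v : Fin (m + 1) → F} (hv : ∀ i, v i ≠ 0) (hprod : (∏ i, v i)⁻¹ = β) :
      β⁻¹ * (∏ i, Fin.init v i)⁻¹ = v (Fin.last m) := by
    have hinit : ∏ i, Fin.init v i ≠ 0 := prod_ne_zero_iff.mpr fun i _ => hv _
    rw [← hprod, inv_inv, Fin.prod_univ_castSucc]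
    field_simp
    exact mul_comm _ _
  refine sum_nbij' Fin.init (fun w => Fin.snoc w (β⁻¹ * (∏ i, w i)⁻¹)) ?_ ?_ ?_ ?_ ?_ <;>
    simp only [mem_filter, Fintype.mem_piFinset, mem_univ, true_and]
  · exact fun v hv _ => hv.1 _
  · intro w hw
    have hprod : ∏ i, w i ≠ 0 := prod_ne_zero_iff.mpr fun i _ => hw i
    constructor
    · intro i
      cases i using Fin.lastCases with
      | last => simpa using ⟨hβ, hprod⟩
      | cast j => simpa using hw j
    · rw [Fin.prod_univ_castSucc]
      simp only [Fin.snoc_castSucc, Fin.snoc_last]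
      field_simp
  · intro v hv
    rw [last_eq hv.1 hv.2, Fin.snoc_init_self]
  · exact fun w _ => Fin.init_snoc _ _
  · intro v hv
    rw [last_eq hv.1 hv.2, Fin.sum_univ_castSucc]
    rfl

variable [CommRing R] [IsDomain R] {ψ : AddChar F R}

theorem AddChar.sum_ne_zero_mul (hψ : ψ ≠ 1) (c : F) :
    ∑ a ∈ univ.filter (· ≠ 0), ψ (a * c) = if c = 0 then (Fintype.card F : R) - 1 else -1 := by
  rw [filter_ne', sum_erase_eq_sub (mem_univ 0), AddChar.sum_mulShift c (.of_ne_one hψ)]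
  split_ifs <;> simp

theorem AddChar.sum_piFinset_ne_zero_sum (hψ : ψ ≠ 1) (m : ℕ) :
    ∑ v ∈ Fintype.piFinset fun _ : Fin m => univ.filter (· ≠ (0 : F)), ψ (∑ i, v i) =
      (-1) ^ m := by
  have h := AddChar.sum_ne_zero_mul hψ 1
  simp only [mul_one, one_ne_zero, if_false] at h
  simp_rw [AddChar.map_sum_eq_prod, ← prod_univ_sum, h, prod_const, card_univ, Fintype.card_fin]

theorem sum_mul_kloosterman (hψ : ψ ≠ 1) (m : ℕ) (β : F) :
    ∑ a ∈ univ.filter (· ≠ 0), ψ (-(a * β)) * kloosterman ψ m a =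
      Fintype.card F * ∑ v ∈ (Fintype.piFinset fun _ : Fin m => univ.filter (· ≠ (0 : F))).filter
        (fun v => (∏ i, v i)⁻¹ = β), ψ (∑ i, v i) + (-1) ^ (m + 1) := by
  set V := Fintype.piFinset fun _ : Fin m => univ.filter (· ≠ (0 : F))
  calc ∑ a ∈ univ.filter (· ≠ 0), ψ (-(a * β)) * kloosterman ψ m a
      = ∑ v ∈ V, ψ (∑ i, v i) * ∑ a ∈ univ.filter (· ≠ 0), ψ (a * ((∏ i, v i)⁻¹ - β)) := by
        simp_rw [kloosterman, mul_sum]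
        rw [sum_comm]
        refine sum_congr rfl fun v _ => sum_congr rfl fun a _ => ?_
        rw [← AddChar.map_add_eq_mul, ← AddChar.map_add_eq_mul]
        ring_nf
    _ = ∑ v ∈ V, ((Fintype.card F : R) * (if (∏ i, v i)⁻¹ = β then ψ (∑ i, v i) else 0)
          - ψ (∑ i, v i)) := by
        simp_rw [AddChar.sum_ne_zero_mul hψ, sub_eq_zero]
        refine sum_congr rfl fun v _ => ?_
        split_ifs <;> ring
    _ = _ := by
        rw [sum_sub_distrib, ← mul_sum, ← sum_filter, AddChar.sum_piFinset_ne_zero_sum hψ]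
        ring

end Kloosterman

theorem Klm_eq_kloosterman {F : Type} [Field F] [Fintype F] [DecidableEq F] [Algebra (ZMod 2) F]
    {r : ℕ} (hF : Fintype.card F = 2 ^ r) (m : ℕ) (a : F) :
    Klm F r m a = kloosterman (traceChar F) m a := by
  unfold Klm kloosterman
  refine Finset.sum_congr ?_ fun v _ => lam_eq_traceChar hF _
  ext v
  simp [Fintype.mem_piFinset]

theorem stmt9_general (r : ℕ) (F : Type) [Field F] [Fintype F] [DecidableEq F]
    (hF : Fintype.card F = 2 ^ r) (m : ℕ) (hm : 1 ≤ m) (β : F) :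
    (β ≠ 0 →
      ∑ a ∈ Finset.univ.filter (fun a : F => a ≠ 0), lam F r (-(a * β)) * Klm F r m a =
        (2 ^ r : ℤ) * Klm F r (m - 1) β⁻¹ + (-1 : ℤ) ^ (m + 1)) ∧
    (β = 0 →
      ∑ a ∈ Finset.univ.filter (fun a : F => a ≠ 0), lam F r (-(a * β)) * Klm F r m a =
        (-1 : ℤ) ^ (m + 1)) := by
  have : Fact (Nat.Prime 2) := ⟨Nat.prime_two⟩
  have : CharP F 2 := charP_of_card_eq_prime_pow hF
  let := ZMod.algebra F 2
  obtain ⟨k, rfl⟩ : ∃ k, m = k + 1 := ⟨m - 1, by omega⟩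
  simp only [lam_eq_traceChar hF, Klm_eq_kloosterman hF, sum_mul_kloosterman traceChar_ne_one, hF,
    Nat.add_sub_cancel, Nat.cast_pow, Nat.cast_ofNat]
  refine ⟨fun hβ => by rw [sum_piFinset_filter_prod_inv_eq hβ]; rfl, fun hβ => ?_⟩
  rw [Finset.filter_false_of_mem fun v hv => ?_, Finset.sum_empty, mul_zero, zero_add]
  simp only [Fintype.mem_piFinset, Finset.mem_filter, Finset.mem_univ, true_and] at hv
  exact hβ ▸ inv_ne_zero (Finset.prod_ne_zero_iff.mpr fun i _ => hv i)

theorem stmt9 (r : ℕ) (hr : 1 ≤ r) (F : Type) [Field F] [Fintype F] [DecidableEq F]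
    (hF : Fintype.card F = 2 ^ r) (m : ℕ) (hm : 1 ≤ m) (β : F) :
    (β ≠ 0 →
      ∑ a ∈ Finset.univ.filter (fun a : F => a ≠ 0), lam F r (-(a * β)) * Klm F r m a =
        (2 ^ r : ℤ) * Klm F r (m - 1) β⁻¹ + (-1 : ℤ) ^ (m + 1)) ∧
    (β = 0 →
      ∑ a ∈ Finset.univ.filter (fun a : F => a ≠ 0), lam F r (-(a * β)) * Klm F r m a =
        (-1 : ℤ) ^ (m + 1)) :=
  stmt9_general r F hF m hm β
end

section
/- Let q = 2^r with r ≥ 3, and let G be either SO⁺(2,q) or O⁺(2,q), with elements listed as g₁,...,g_N. Then the 𝔽_2-linear map 𝔽_q → 𝔽_2^N sending a to c(a) = (tr(a·Tr g₁),...,tr(a·Tr g_N)) is injective, and its image is exactly the dual code C(G)^⊥ = {v ∈ 𝔽_2^N : v·u = 0 for all u ∈ C(G)}; in particular it is an 𝔽_2-linear isomorphism from 𝔽_q onto C(G)^⊥. -/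
open Finset Matrix

/-!
Over `𝔽₂ = ZMod 2` the map `tr2` is the field trace `Tr_{F/𝔽₂} x = ∑_{i<r} x^(2^i)`, so
`c(a) = (Tr (a t_g))_g` with `t_g = Tr g` is `𝔽₂`-linear, and `C(G)` is the kernel of
`u ↦ ∑ u_g t_g`. As the trace form is nondegenerate, every functional on `F` is `x ↦ Tr (a x)`;
a vector `v` orthogonal to `C(G)` induces a functional on the span of the `t_g`, extends to `F`,
and so is some `c(a)`.

For injectivity, `G` contains `diag(α, α⁻¹)`, of trace `α + α⁻¹`, for every `α ≠ 0`. If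
`Tr (a (α + α⁻¹)) = 0` for all such `α`, multiply by `α⁻¹` and sum over `Fˣ`, substituting
`α ↦ α⁻¹` in the half coming from `Tr (a α⁻¹)`. Expanding `Tr` into powers, the power sums
`∑ α^m` vanish unless `q - 1 ∣ m`, which leaves only `a ∑ α⁰ = -a`; this needs `q ≥ 8`, so that
`q - 1 ∤ 2^i + 1` for `i < r`.
-/

theorem range_trace_mul_eq_dotProduct_orthogonal_ker {K L ι : Type*} [Field K] [Field L]
    [Algebra K L] [FiniteDimensional K L] [Algebra.IsSeparable K L] [Fintype ι] (t : ι → L) :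
    Set.range (fun a : L => fun i => Algebra.trace K L (a * t i)) =
      {v : ι → K | ∀ u, Fintype.linearCombination K t u = 0 → v ⬝ᵥ u = 0} := by
  classical
  ext v
  constructor
  · rintro ⟨a, rfl⟩ u hu
    calc (fun i => Algebra.trace K L (a * t i)) ⬝ᵥ u
        = Algebra.trace K L (a * Fintype.linearCombination K t u) := by
          simp only [dotProduct, Fintype.linearCombination_apply, Finset.mul_sum, map_sum,
            mul_smul_comm, map_smul, smul_eq_mul, mul_comm]
      _ = 0 := by rw [hu, mul_zero, map_zero]
  · intro hv
    have hmem : Fintype.linearCombination K v ∈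
        (LinearMap.ker (Fintype.linearCombination K t)).dualAnnihilator := by
      rw [Submodule.mem_dualAnnihilator]
      intro u hu
      simpa [Fintype.linearCombination_apply, dotProduct, mul_comm] using hv u hu
    rw [← LinearMap.range_dualMap_eq_dualAnnihilator_ker] at hmem
    obtain ⟨ℓ, hℓ⟩ := hmem
    have hB := traceForm_nondegenerate K L
    refine ⟨(LinearMap.BilinForm.toDual _ hB).symm ℓ, funext fun i => ?_⟩
    have hℓi := LinearMap.congr_fun hℓ (Pi.single i 1)
    simp only [LinearMap.dualMap_apply, Fintype.linearCombination_apply_single, one_smul] at hℓi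
    change Algebra.trace K L (_ * t i) = v i
    rw [← hℓi, ← Algebra.traceForm_apply, ← LinearMap.BilinForm.toDual_def hB,
      LinearEquiv.apply_symm_apply]

section PowerSums

variable {F : Type*} [Field F] [Fintype F] [DecidableEq F] {r : ℕ}

theorem sum_units_pow_two_pow_sub_one (hF : Fintype.card F = 2 ^ r) {i : ℕ} (hi : i < r) :
    ∑ α : Fˣ, (α : F) ^ (2 ^ i - 1) = if i = 0 then -1 else 0 := by
  rw [FiniteField.sum_pow_units, hF]
  have h1 := Nat.one_le_two_pow (n := i)
  have hlt : 2 ^ i - 1 < 2 ^ r - 1 := by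
    have := Nat.pow_lt_pow_right (by norm_num : 1 < 2) hi
    omega
  refine if_congr ⟨fun h => ?_, fun h => by simp [h]⟩ rfl rfl
  have : 2 ^ i = 2 ^ 0 := by have := Nat.eq_zero_of_dvd_of_lt h hlt; omega
  exact Nat.pow_right_injective le_rfl this

theorem sum_units_pow_two_pow_add_one (hF : Fintype.card F = 2 ^ r) (hr : 3 ≤ r) {i : ℕ}
    (hi : i < r) : ∑ α : Fˣ, (α : F) ^ (2 ^ i + 1) = 0 := by
  rw [FiniteField.sum_pow_units, hF, if_neg]
  have h1 := Nat.one_le_two_pow (n := i)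
  have hi' : 2 ^ i ≤ 2 ^ (r - 1) := Nat.pow_le_pow_right (by norm_num) (by omega)
  have h4 : 2 ^ 2 ≤ 2 ^ (r - 1) := Nat.pow_le_pow_right (by norm_num) (by omega)
  have hr' : 2 ^ r = 2 * 2 ^ (r - 1) := by rw [← pow_succ']; congr 1; omega
  exact Nat.not_dvd_of_pos_of_lt (by omega) (by omega)

end PowerSums

section TraceSums

variable {F : Type} [Field F] [Fintype F] [DecidableEq F] {r : ℕ}

theorem sum_units_trF_mul_mul_inv (hF : Fintype.card F = 2 ^ r) (a : F) :
    ∑ α : Fˣ, trF F r (a * α) * (α : F)⁻¹ = -a := by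
  have hr : 0 < r := Nat.pos_of_ne_zero <| by
    rintro rfl
    exact Fintype.one_lt_card.ne' (by simpa using hF)
  calc ∑ α : Fˣ, trF F r (a * α) * (α : F)⁻¹
      = ∑ i ∈ range r, a ^ 2 ^ i * ∑ α : Fˣ, (α : F) ^ (2 ^ i - 1) := by
        simp only [trF, Finset.sum_mul, Finset.mul_sum]
        rw [Finset.sum_comm]
        refine Finset.sum_congr rfl fun i _ => Finset.sum_congr rfl fun α _ => ?_
        rw [pow_sub₀ _ α.ne_zero Nat.one_le_two_pow, mul_pow, pow_one, mul_assoc]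
    _ = -a := by
        rw [Finset.sum_eq_single_of_mem 0 (mem_range.2 hr)]
        · rw [sum_units_pow_two_pow_sub_one hF hr, if_pos rfl]
          simp
        · intro i hi hi0
          simp [sum_units_pow_two_pow_sub_one hF (mem_range.1 hi), hi0]

theorem sum_units_trF_mul_mul (hF : Fintype.card F = 2 ^ r) (hr : 3 ≤ r) (a : F) :
    ∑ α : Fˣ, trF F r (a * α) * α = 0 := by
  calc ∑ α : Fˣ, trF F r (a * α) * α
      = ∑ i ∈ range r, a ^ 2 ^ i * ∑ α : Fˣ, (α : F) ^ (2 ^ i + 1) := by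
        simp only [trF, Finset.sum_mul, Finset.mul_sum]
        rw [Finset.sum_comm]
        refine Finset.sum_congr rfl fun i _ => Finset.sum_congr rfl fun α _ => ?_
        rw [pow_succ, mul_pow, mul_assoc]
    _ = 0 := Finset.sum_eq_zero fun i hi => by
        rw [sum_units_pow_two_pow_add_one hF hr (mem_range.1 hi), mul_zero]

end TraceSums

section TraceOverZModTwo

variable {F : Type} [Field F] [Fintype F] [Algebra (ZMod 2) F] {r : ℕ}

theorem finrank_eq_of_card_eq_two_pow (hF : Fintype.card F = 2 ^ r) :
    Module.finrank (ZMod 2) F = r :=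
  Nat.pow_right_injective le_rfl <| show 2 ^ _ = 2 ^ r by
    rw [← hF, Module.card_eq_pow_finrank (K := ZMod 2), ZMod.card]

theorem algebraMap_trace_eq_trF (hF : Fintype.card F = 2 ^ r) (x : F) :
    algebraMap (ZMod 2) F (Algebra.trace (ZMod 2) F x) = trF F r x := by
  simpa [trF, finrank_eq_of_card_eq_two_pow hF] using
    FiniteField.algebraMap_trace_eq_sum_pow (ZMod 2) F x

theorem tr2_eq_trace (hF : Fintype.card F = 2 ^ r) : tr2 F r = Algebra.trace (ZMod 2) F := by
  funext x
  rw [tr2, ← algebraMap_trace_eq_trF hF, map_eq_zero_iff _ (FaithfulSMul.algebraMap_injective _ _)]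
  generalize Algebra.trace (ZMod 2) F x = t
  fin_cases t
  exacts [if_pos rfl, if_neg one_ne_zero]

theorem exists_trace_mul_add_inv_ne_zero (hF : Fintype.card F = 2 ^ r) (hr : 3 ≤ r) {a : F}
    (ha : a ≠ 0) : ∃ α : F, α ≠ 0 ∧ Algebra.trace (ZMod 2) F (a * (α + α⁻¹)) ≠ 0 := by
  classical
  by_contra! h
  have hsplit : ∀ α : Fˣ, trF F r (a * (α + (α : F)⁻¹)) =
      trF F r (a * α) + trF F r (a * ((α⁻¹ : Fˣ) : F)) := by
    intro α
    simp only [← algebraMap_trace_eq_trF hF, mul_add, map_add, Units.val_inv_eq_inv_val]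
  have hzero : ∑ α : Fˣ, trF F r (a * (α + (α : F)⁻¹)) * (α : F)⁻¹ = 0 :=
    Finset.sum_eq_zero fun α _ => by
      rw [← algebraMap_trace_eq_trF hF, h α α.ne_zero, map_zero, zero_mul]
  have hinv : ∑ α : Fˣ, trF F r (a * ((α⁻¹ : Fˣ) : F)) * ((α⁻¹ : Fˣ) : F) =
      ∑ α : Fˣ, trF F r (a * α) * α :=
    Fintype.sum_equiv (Equiv.inv Fˣ) _ _ fun _ => rfl
  have hsum : ∑ α : Fˣ, trF F r (a * (α + (α : F)⁻¹)) * (α : F)⁻¹ = -a + 0 := by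
    rw [← sum_units_trF_mul_mul_inv hF a, ← sum_units_trF_mul_mul hF hr a, ← hinv,
      ← Finset.sum_add_distrib]
    refine Finset.sum_congr rfl fun α _ => ?_
    rw [hsplit, add_mul, Units.val_inv_eq_inv_val]
  exact ha (by simpa [hzero] using hsum)

theorem injective_trace_mul (hF : Fintype.card F = 2 ^ r) (hr : 3 ≤ r) {ι : Type*}
    (t : ι → F) (ht : ∀ α : F, α ≠ 0 → ∃ i, t i = α + α⁻¹) :
    Function.Injective fun a : F => fun i => Algebra.trace (ZMod 2) F (a * t i) := by
  intro a b hab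
  by_contra hne
  obtain ⟨α, hα, htr⟩ := exists_trace_mul_add_inv_ne_zero hF hr (sub_ne_zero.2 hne)
  obtain ⟨i, hi⟩ := ht α hα
  exact htr (by rw [← hi, sub_mul, map_sub, sub_eq_zero]; exact congrFun hab i)

theorem mem_code_iff [DecidableEq F] {ι : Type} [Fintype ι] [DecidableEq ι]
    (G : Finset (Matrix ι ι F)) (u : ↥G → ZMod 2) :
    u ∈ code F G ↔
      Fintype.linearCombination (ZMod 2) (fun g : ↥G => trace (g : Matrix ι ι F)) u = 0 := by
  simp only [code, Finset.mem_filter, Finset.mem_univ, true_and, Fintype.linearCombination_apply,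
    ← Nat.cast_smul_eq_nsmul (ZMod 2), ZMod.natCast_zmod_val]

end TraceOverZModTwo

def hyperbolicDiag (F : Type) [Field F] (n : ℕ) (α : F) :
    Matrix (Fin n ⊕ Fin n) (Fin n ⊕ Fin n) F :=
  Matrix.diagonal (Sum.elim (fun _ => α) (fun _ => α⁻¹))

theorem trace_hyperbolicDiag (F : Type) [Field F] (n : ℕ) (α : F) :
    trace (hyperbolicDiag F n α) = n * (α + α⁻¹) := by
  simp [hyperbolicDiag, Matrix.trace_diagonal, Fintype.sum_sum_type]
  ring

theorem hyperbolicDiag_mem_SOplusGrp (F : Type) [Field F] [Fintype F] [DecidableEq F] (n : ℕ)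
    {α : F} (hα : α ≠ 0) : hyperbolicDiag F n α ∈ SOplusGrp F n := by
  simp only [SOplusGrp, OplusGrp, Finset.mem_filter, Finset.mem_univ, true_and, hyperbolicDiag,
    toBlocks₁₂_diagonal, Matrix.zero_mul, Matrix.trace_zero, and_true]
  refine ⟨?_, fun x => ?_⟩
  · simp [Matrix.isUnit_iff_isUnit_det, Matrix.det_diagonal, Fintype.prod_sum_type, hα]
  · simp only [thetaPlus, Matrix.mulVec_diagonal, Sum.elim_inl, Sum.elim_inr]
    refine Finset.sum_congr rfl fun i _ => ?_
    rw [mul_mul_mul_comm, mul_inv_cancel₀ hα, one_mul]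

theorem stmt15 (r : ℕ) (hr : 3 ≤ r) (F : Type) [Field F] [Fintype F] [DecidableEq F]
    (hF : Fintype.card F = 2 ^ r)
    (G : Finset (Matrix (Fin 1 ⊕ Fin 1) (Fin 1 ⊕ Fin 1) F))
    (hG : G = SOplusGrp F 1 ∨ G = OplusGrp F 1) :
    Function.Injective
      (fun a : F => fun g : ↥G => tr2 F r (a * Matrix.trace (g : Matrix (Fin 1 ⊕ Fin 1) (Fin 1 ⊕ Fin 1) F))) ∧
    (∀ a b : F, ∀ g : ↥G,
      tr2 F r ((a + b) * Matrix.trace (g : Matrix (Fin 1 ⊕ Fin 1) (Fin 1 ⊕ Fin 1) F)) =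
        tr2 F r (a * Matrix.trace (g : Matrix (Fin 1 ⊕ Fin 1) (Fin 1 ⊕ Fin 1) F)) + tr2 F r (b * Matrix.trace (g : Matrix (Fin 1 ⊕ Fin 1) (Fin 1 ⊕ Fin 1) F))) ∧
    Set.range (fun a : F => fun g : ↥G => tr2 F r (a * Matrix.trace (g : Matrix (Fin 1 ⊕ Fin 1) (Fin 1 ⊕ Fin 1) F))) =
      {v : ↥G → ZMod 2 | ∀ u ∈ code F G, ∑ g : ↥G, v g * u g = 0} := by
  have : Fact (Nat.Prime 2) := ⟨Nat.prime_two⟩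
  have := charP_of_card_eq_prime_pow hF
  let _ : Algebra (ZMod 2) F := ZMod.algebra F 2
  have hSO : SOplusGrp F 1 ⊆ G := by
    rcases hG with rfl | rfl
    exacts [subset_rfl, Finset.filter_subset _ _]
  have hdiag (α : F) (hα : α ≠ 0) :
      ∃ g : ↥G, trace (g : Matrix (Fin 1 ⊕ Fin 1) (Fin 1 ⊕ Fin 1) F) = α + α⁻¹ :=
    ⟨⟨hyperbolicDiag F 1 α, hSO (hyperbolicDiag_mem_SOplusGrp F 1 hα)⟩,
      by simp [trace_hyperbolicDiag]⟩
  rw [tr2_eq_trace hF]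
  refine ⟨injective_trace_mul hF hr _ hdiag, fun a b g => by rw [add_mul, map_add], ?_⟩
  rw [range_trace_mul_eq_dotProduct_orthogonal_ker]
  ext v
  simp only [Set.mem_ofPred_eq, mem_code_iff, dotProduct]
end
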